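/- arXiv:2309.03985 — 2 statements merged into one kernel-verified Lean document; each statement's English description precedes it below -/
import Mathlib

section
/- Let (X,𝓕) be a measurable space, θ a probability measure on X, and 𝓓, 𝓔 ⊂ 𝓕 countable partitions of X with finite entropies. If 𝓓 and 𝓔 are C-commensurable for some C ≥ 1, meaning every D ∈ 𝓓 intersects at most C elements of 𝓔 and every E ∈ 𝓔 intersects at most C elements of 𝓓, then |H(θ,𝓓) − H(θ,𝓔)| ≤ 2 log C. -/
open MeasureTheory ENNReal

/-- Entropy (base 2) of a measure with respect to a countable indexed partition. -/
noncomputable def partEnt {X : Type*} [MeasurableSpace X] (θ : Measure X)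
    {I : Type*} (D : I → Set X) : ℝ :=
  ∑' i, -((θ (D i)).toReal * Real.logb 2 (θ (D i)).toReal)


lemma phi_nonneg {t : ℝ} (h0 : 0 ≤ t) (h1 : t ≤ 1) : 0 ≤ -(t * Real.logb 2 t) := by
  have h := Real.logb_nonpos (b := 2) one_lt_two h0 h1
  nlinarith

lemma phi_sum_le {α : Type*} (s : Finset α) (f : α → ℝ) (h0 : ∀ a ∈ s, 0 ≤ f a) :
    -((∑ a ∈ s, f a) * Real.logb 2 (∑ a ∈ s, f a)) ≤ ∑ a ∈ s, -(f a * Real.logb 2 (f a)) := by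
  set t := ∑ a ∈ s, f a with ht
  have h1 : ∑ a ∈ s, -(f a * Real.logb 2 t) = -(t * Real.logb 2 t) := by
    rw [Finset.sum_neg_distrib, ← Finset.sum_mul]
  rw [← h1]
  refine Finset.sum_le_sum fun a ha => ?_
  rcases (h0 a ha).eq_or_lt with h | h
  · simp [← h]
  · have hat : f a ≤ t := Finset.single_le_sum h0 ha
    have : Real.logb 2 (f a) ≤ Real.logb 2 t :=
      Real.logb_le_logb_of_le one_lt_two h hat
    nlinarith

lemma ent_sum_le {α : Type*} (s : Finset α) (f : α → ℝ) (h0 : ∀ a ∈ s, 0 ≤ f a)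
    (C : ℕ) (hC : 1 ≤ C) (hcard : s.card ≤ C) :
    ∑ a ∈ s, -(f a * Real.logb 2 (f a)) ≤
      -((∑ a ∈ s, f a) * Real.logb 2 (∑ a ∈ s, f a)) + (∑ a ∈ s, f a) * Real.logb 2 C := by
  classical
  set s' := s.filter (fun a => f a ≠ 0) with hs'
  have hfs : ∑ a ∈ s', f a = ∑ a ∈ s, f a :=
    Finset.sum_filter_of_ne (fun a _ h => h)
  have hgs : ∑ a ∈ s', -(f a * Real.logb 2 (f a)) = ∑ a ∈ s, -(f a * Real.logb 2 (f a)) :=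
    Finset.sum_filter_of_ne (fun a _ h => by intro h0; apply h; rw [h0]; simp)
  have hcard' : s'.card ≤ C := le_trans (Finset.card_filter_le _ _) hcard
  have hpos : ∀ a ∈ s', 0 < f a := by
    intro a ha
    rw [hs', Finset.mem_filter] at ha
    exact lt_of_le_of_ne (h0 a ha.1) (Ne.symm ha.2)
  rw [← hfs, ← hgs]
  rcases Finset.eq_empty_or_nonempty s' with h | hne
  · simp [h]
  set e := ∑ a ∈ s', f a with he
  have hepos : 0 < e := Finset.sum_pos hpos hne
  set n := s'.card with hn
  have hnpos : 0 < n := Finset.card_pos.mpr hne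
  -- Jensen
  have hw1 : ∑ a ∈ s', f a / e = 1 := by
    rw [← Finset.sum_div, ← he, div_self hepos.ne']
  have jensen := (strictConcaveOn_log_Ioi.concaveOn).le_map_sum
    (t := s') (w := fun a => f a / e) (p := fun a => e / f a)
    (fun a ha => div_nonneg (h0 a (Finset.mem_of_mem_filter a ha)) hepos.le) hw1
    (fun a ha => Set.mem_Ioi.mpr (div_pos hepos (hpos a ha)))
  simp only [smul_eq_mul] at jensen
  have hsum1 : ∑ a ∈ s', f a / e * (e / f a) = (n : ℝ) := by
    have hone : ∀ a ∈ s', f a / e * (e / f a) = 1 := by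
      intro a ha
      have := hpos a ha
      field_simp
    rw [Finset.sum_congr rfl hone, Finset.sum_const, nsmul_eq_mul, mul_one, hn]
  rw [hsum1] at jensen
  have hlogn : Real.log n ≤ Real.log C := by
    have h1 : (n : ℝ) ≤ (C : ℝ) := by exact_mod_cast hcard'
    exact Real.log_le_log (by exact_mod_cast hnpos) h1
  have key : ∑ a ∈ s', f a * Real.log (e / f a) ≤ e * Real.log C := by
    have h2 : ∑ a ∈ s', f a * Real.log (e / f a)
        = e * ∑ a ∈ s', f a / e * Real.log (e / f a) := by
      rw [Finset.mul_sum]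
      refine Finset.sum_congr rfl fun a ha => ?_
      field_simp
    rw [h2]
    calc e * ∑ a ∈ s', f a / e * Real.log (e / f a)
        ≤ e * Real.log n := mul_le_mul_of_nonneg_left jensen hepos.le
      _ ≤ e * Real.log C := mul_le_mul_of_nonneg_left hlogn hepos.le
  -- convert to logb
  have hlog2 : (0:ℝ) < Real.log 2 := Real.log_pos one_lt_two
  have h3 : e * Real.logb 2 e = ∑ a ∈ s', f a * Real.logb 2 e := by
    rw [he, Finset.sum_mul]
  have expand : ∑ a ∈ s', -(f a * Real.logb 2 (f a)) + e * Real.logb 2 e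
      = ∑ a ∈ s', f a * Real.logb 2 (e / f a) := by
    rw [h3, ← Finset.sum_add_distrib]
    refine Finset.sum_congr rfl fun a ha => ?_
    rw [Real.logb_div hepos.ne' (hpos a ha).ne']
    ring
  have hsumlogb : ∑ a ∈ s', f a * Real.logb 2 (e / f a)
      = (∑ a ∈ s', f a * Real.log (e / f a)) / Real.log 2 := by
    rw [Finset.sum_div]
    refine Finset.sum_congr rfl fun a ha => ?_
    rw [Real.logb, div_eq_mul_inv, div_eq_mul_inv]
    ring
  have h4 : e * Real.logb 2 (C : ℝ) = (e * Real.log C) / Real.log 2 := by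
    rw [Real.logb]; ring
  have hfin : ∑ a ∈ s', f a * Real.logb 2 (e / f a) ≤ e * Real.logb 2 C := by
    rw [hsumlogb, h4]
    gcongr
  linarith

set_option maxHeartbeats 1000000 in
lemma partEnt_le {X : Type*} [MeasurableSpace X] {I J : Type*} [Countable I] [Countable J]
    (θ : Measure X) [IsProbabilityMeasure θ]
    (D : I → Set X) (E : J → Set X)
    (hDmeas : ∀ i, MeasurableSet (D i)) (hEmeas : ∀ j, MeasurableSet (E j))
    (hDdisj : Pairwise (Function.onFun Disjoint D))
    (hEdisj : Pairwise (Function.onFun Disjoint E))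
    (hDcov : (⋃ i, D i) = Set.univ) (hEcov : (⋃ j, E j) = Set.univ)
    (hDent : Summable fun i => -((θ (D i)).toReal * Real.logb 2 (θ (D i)).toReal))
    (hEent : Summable fun j => -((θ (E j)).toReal * Real.logb 2 (θ (E j)).toReal))
    (C : ℕ) (hC : 1 ≤ C)
    (hDE : ∀ i, {j | (D i ∩ E j).Nonempty}.encard ≤ C)
    (hED : ∀ j, {i | (D i ∩ E j).Nonempty}.encard ≤ C) :
    partEnt θ D ≤ partEnt θ E + Real.logb 2 C := by
  classical
  set x : I → J → ℝ := fun i j => (θ (D i ∩ E j)).toReal with hxdef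
  have xnn : ∀ i j, 0 ≤ x i j := fun i j => ENNReal.toReal_nonneg
  have xle1 : ∀ i j, x i j ≤ 1 := by
    intro i j
    have h1 : θ (D i ∩ E j) ≤ 1 := prob_le_one
    calc x i j ≤ (1 : ℝ≥0∞).toReal := ENNReal.toReal_mono one_ne_top h1
      _ = 1 := by simp
  -- finite index sets
  have hTfin : ∀ i, {j | (D i ∩ E j).Nonempty}.Finite := fun i =>
    Set.encard_lt_top_iff.mp (lt_of_le_of_lt (hDE i) (WithTop.coe_lt_top C))
  have hSfin : ∀ j, {i | (D i ∩ E j).Nonempty}.Finite := fun j =>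
    Set.encard_lt_top_iff.mp (lt_of_le_of_lt (hED j) (WithTop.coe_lt_top C))
  set T : I → Finset J := fun i => (hTfin i).toFinset with hTdef
  set S : J → Finset I := fun j => (hSfin j).toFinset with hSdef
  have hScard : ∀ j, (S j).card ≤ C := by
    intro j
    have h1 := hED j
    rw [(hSfin j).encard_eq_coe_toFinset_card] at h1
    exact_mod_cast h1
  have hmemT : ∀ i j, j ∈ T i ↔ (D i ∩ E j).Nonempty := fun i j => (hTfin i).mem_toFinset
  have hmemS : ∀ i j, i ∈ S j ↔ (D i ∩ E j).Nonempty := fun i j => (hSfin j).mem_toFinset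
  have hxzT : ∀ i j, j ∉ T i → x i j = 0 := by
    intro i j hj
    rw [hmemT, Set.not_nonempty_iff_eq_empty] at hj
    simp [hxdef, hj]
  have hxzS : ∀ i j, i ∉ S j → x i j = 0 := by
    intro i j hi
    rw [hmemS, Set.not_nonempty_iff_eq_empty] at hi
    simp [hxdef, hi]
  have hinter_meas : ∀ i j, MeasurableSet (D i ∩ E j) :=
    fun i j => (hDmeas i).inter (hEmeas j)
  -- decomposition of measures
  have hd : ∀ i, (θ (D i)).toReal = ∑ j ∈ T i, x i j := by
    intro i
    have hU : D i = ⋃ j, D i ∩ E j := by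
      rw [← Set.inter_iUnion, hEcov, Set.inter_univ]
    have hdisj' : Pairwise (Function.onFun Disjoint fun j => D i ∩ E j) := fun j j' hjj' =>
      (hEdisj hjj').mono Set.inter_subset_right Set.inter_subset_right
    have h1 : θ (D i) = ∑' j, θ (D i ∩ E j) := by
      conv_lhs => rw [hU]
      exact measure_iUnion hdisj' (fun j => hinter_meas i j)
    have h2 : (∑' j, θ (D i ∩ E j)) = ∑ j ∈ T i, θ (D i ∩ E j) := by
      refine tsum_eq_sum fun j hj => ?_
      rw [hmemT, Set.not_nonempty_iff_eq_empty] at hj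
      simp [hj]
    rw [h1, h2, ENNReal.toReal_sum (fun j _ => measure_ne_top θ _)]
  have he : ∀ j, (θ (E j)).toReal = ∑ i ∈ S j, x i j := by
    intro j
    have hU : E j = ⋃ i, D i ∩ E j := by
      rw [← Set.iUnion_inter, hDcov, Set.univ_inter]
    have hdisj' : Pairwise (Function.onFun Disjoint fun i => D i ∩ E j) := fun i i' hii' =>
      (hDdisj hii').mono Set.inter_subset_left Set.inter_subset_left
    have h1 : θ (E j) = ∑' i, θ (D i ∩ E j) := by
      conv_lhs => rw [hU]
      exact measure_iUnion hdisj' (fun i => hinter_meas i j)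
    have h2 : (∑' i, θ (D i ∩ E j)) = ∑ i ∈ S j, θ (D i ∩ E j) := by
      refine tsum_eq_sum fun i hi => ?_
      rw [hmemS, Set.not_nonempty_iff_eq_empty] at hi
      simp [hi]
    rw [h1, h2, ENNReal.toReal_sum (fun i _ => measure_ne_top θ _)]
  -- joint entropy terms
  set g : I → J → ℝ := fun i j => -(x i j * Real.logb 2 (x i j)) with hgdef
  have gnn : ∀ i j, 0 ≤ g i j := fun i j => phi_nonneg (xnn i j) (xle1 i j)
  have gzT : ∀ i j, j ∉ T i → g i j = 0 := by
    intro i j hj; simp [hgdef, hxzT i j hj]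
  have gzS : ∀ i j, i ∉ S j → g i j = 0 := by
    intro i j hi; simp [hgdef, hxzS i j hi]
  set F : J → ℝ := fun j => ∑ i ∈ S j, g i j with hFdef
  set G : I → ℝ := fun i => ∑ j ∈ T i, g i j with hGdef
  have stepA : ∀ i, -((θ (D i)).toReal * Real.logb 2 (θ (D i)).toReal) ≤ G i := by
    intro i
    rw [hd i]
    exact phi_sum_le _ _ (fun j _ => xnn i j)
  have stepB : ∀ j, F j ≤ -((θ (E j)).toReal * Real.logb 2 (θ (E j)).toReal)
      + (θ (E j)).toReal * Real.logb 2 C := by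
    intro j
    rw [he j]
    exact ent_sum_le _ _ (fun i _ => xnn i j) C hC (hScard j)
  -- summability facts
  have hEsum1 : (∑' j, θ (E j)) = 1 := by
    rw [← measure_iUnion hEdisj hEmeas, hEcov, measure_univ]
  have hesum : Summable (fun j => (θ (E j)).toReal) :=
    ENNReal.summable_toReal (by rw [hEsum1]; exact one_ne_top)
  have hesum1 : ∑' j, (θ (E j)).toReal = 1 := by
    rw [← ENNReal.tsum_toReal_eq (fun j => measure_ne_top θ _), hEsum1]
    simp
  have hRHSsum : Summable (fun j => -((θ (E j)).toReal * Real.logb 2 (θ (E j)).toReal)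
      + (θ (E j)).toReal * Real.logb 2 C) := hEent.add (hesum.mul_right _)
  have hFnn : ∀ j, 0 ≤ F j := fun j => Finset.sum_nonneg fun i _ => gnn i j
  have hFsum : Summable F := Summable.of_nonneg_of_le hFnn stepB hRHSsum
  -- summability of the double family
  have hinner : ∀ j, Summable fun i => g i j := fun j =>
    summable_of_ne_finset_zero (s := S j) (fun i hi => gzS i j hi)
  have htsumF : ∀ j, (∑' i, g i j) = F j := fun j =>
    tsum_eq_sum (fun i hi => gzS i j hi)
  have hq : Summable (fun p : J × I => g p.2 p.1) := by
    rw [summable_prod_of_nonneg (fun p => gnn p.2 p.1)]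
    refine ⟨fun j => hinner j, ?_⟩
    apply Summable.congr hFsum
    intro j
    exact (htsumF j).symm
  have hg2 : Summable (fun p : I × J => g p.1 p.2) := hq.prod_symm
  have htsumG : ∀ i, (∑' j, g i j) = G i := fun i =>
    tsum_eq_sum (fun j hj => gzT i j hj)
  have hGsum : Summable G := by
    apply Summable.congr (hg2.prod)
    intro i
    exact htsumG i
  -- the chain of inequalities
  have step1 : partEnt θ D ≤ ∑' i, G i :=
    Summable.tsum_le_tsum stepA hDent hGsum
  have step2 : (∑' i, G i) = ∑' j, F j := by
    calc (∑' i, G i) = ∑' i, ∑' j, g i j := tsum_congr fun i => (htsumG i).symm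
      _ = ∑' j, ∑' i, g i j := by
        have hu : Summable (Function.uncurry g) := hg2
        exact (Summable.tsum_comm hu).symm
      _ = ∑' j, F j := tsum_congr fun j => htsumF j
  have step3 : (∑' j, F j) ≤ ∑' j, (-((θ (E j)).toReal * Real.logb 2 (θ (E j)).toReal)
      + (θ (E j)).toReal * Real.logb 2 C) := Summable.tsum_le_tsum stepB hFsum hRHSsum
  have step4 : (∑' j, (-((θ (E j)).toReal * Real.logb 2 (θ (E j)).toReal)
      + (θ (E j)).toReal * Real.logb 2 C)) = partEnt θ E + Real.logb 2 C := by
    rw [Summable.tsum_add hEent (hesum.mul_right _), tsum_mul_right, hesum1, one_mul]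
    rfl
  calc partEnt θ D ≤ ∑' i, G i := step1
    _ = ∑' j, F j := step2
    _ ≤ _ := step3
    _ = partEnt θ E + Real.logb 2 C := step4

/-- If two countable partitions `𝓓`, `𝓔` of `X` are `C`-commensurable (each element of one
meets at most `C` elements of the other), then the entropies of any probability measure with
respect to them differ by at most `2 log C`. -/
theorem stmt3 {X : Type*} [MeasurableSpace X] {I J : Type*} [Countable I] [Countable J]
    (θ : Measure X) [IsProbabilityMeasure θ]
    (D : I → Set X) (E : J → Set X)
    (hDmeas : ∀ i, MeasurableSet (D i)) (hEmeas : ∀ j, MeasurableSet (E j))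
    (hDdisj : Pairwise (Function.onFun Disjoint D))
    (hEdisj : Pairwise (Function.onFun Disjoint E))
    (hDcov : (⋃ i, D i) = Set.univ) (hEcov : (⋃ j, E j) = Set.univ)
    (hDent : Summable fun i => -((θ (D i)).toReal * Real.logb 2 (θ (D i)).toReal))
    (hEent : Summable fun j => -((θ (E j)).toReal * Real.logb 2 (θ (E j)).toReal))
    (C : ℕ) (hC : 1 ≤ C)
    (hDE : ∀ i, {j | (D i ∩ E j).Nonempty}.encard ≤ C)
    (hED : ∀ j, {i | (D i ∩ E j).Nonempty}.encard ≤ C) :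
    |partEnt θ D - partEnt θ E| ≤ 2 * Real.logb 2 C := by
  have h1 := partEnt_le θ D E hDmeas hEmeas hDdisj hEdisj hDcov hEcov hDent hEent C hC hDE hED
  have h2 := partEnt_le θ E D hEmeas hDmeas hEdisj hDdisj hEcov hDcov hEent hDent C hC
    (fun j => by simpa [Set.inter_comm] using hED j)
    (fun i => by simpa [Set.inter_comm] using hDE i)
  have hlog : 0 ≤ Real.logb 2 C :=
    Real.logb_nonneg one_lt_two (by exact_mod_cast hC)
  rw [abs_sub_le_iff]
  constructor <;> linarith
end

section
/- Let p be a probability vector on a finite set Λ and let Φ be a diagonal affine IFS on ℝ^d with contraction ratios r_{i,j}. For every ε > 0 there exists δ = δ(p,ε) > 0 such that: for every n ≥ 1 and every probability vector q = (q_u)_{u∈Λⁿ} with (1/n)H(q) ≥ H(p) − δ and |(1/n)Σ_{u∈Λⁿ} q_u log|r_{u,j}| − Σ_{i∈Λ} p_i log|r_{i,j}|| ≤ δ for each 1 ≤ j ≤ d, one has dim_L({φ_u}_{u∈Λⁿ}, q) > dim_L(Φ, p) − ε. -/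
/-!
Normalize the `n`-th iterate by `1/n`; the Lyapunov dimension is invariant under scaling entropy
and exponents by the same positive factor. Let `c > 0` bound the exponents of `p` from below. The
Lyapunov dimension is increasing in the entropy and decreasing in the sorted exponents, and
`δ`-close exponents are at most `1 + δ/c` times those of `p`; absorbing this factor into the
entropy lowers it by at most `δ(E + c)/c`. Finally, every piece of the Lyapunov dimension as a
function of the entropy has slope at most `1/c`, so the dimension drops by at most
`δ(E + c)/c²`.
-/

open Finset Classical

/-- The Lyapunov dimension associated to an entropy `E` and exponents `χ` (which get
reordered increasingly): with `m = max{0 ≤ j ≤ d : χ₁+…+χ_j ≤ E}`, it equals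
`m + (E − χ₁ − … − χ_m)/χ_{m+1}` when `m < d` and `d·E/(χ₁+…+χ_d)` when `m = d`. -/
noncomputable def lyapDim (d : ℕ) (E : ℝ) (χ : Fin d → ℝ) : ℝ :=
  let g : ℕ → ℝ := fun k => if h : k < d then χ (Tuple.sort χ ⟨k, h⟩) else 0
  let m : ℕ := Nat.findGreatest (fun j => ∑ k ∈ range j, g k ≤ E) d
  if m < d then (m : ℝ) + (E - ∑ k ∈ range m, g k) / g m
  else (d : ℝ) * E / ∑ k ∈ range d, g k

noncomputable def sortedExponents (d : ℕ) (χ : Fin d → ℝ) (k : ℕ) : ℝ :=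
  if h : k < d then χ (Tuple.sort χ ⟨k, h⟩) else 0

noncomputable def lyapIndex (d : ℕ) (E : ℝ) (g : ℕ → ℝ) : ℕ :=
  Nat.findGreatest (fun j => ∑ k ∈ range j, g k ≤ E) d

noncomputable def lyapDimOfSeq (d : ℕ) (E : ℝ) (g : ℕ → ℝ) : ℝ :=
  if lyapIndex d E g < d then
    lyapIndex d E g + (E - ∑ k ∈ range (lyapIndex d E g), g k) / g (lyapIndex d E g)
  else d * E / ∑ k ∈ range d, g k

theorem lyapDim_eq_lyapDimOfSeq (d : ℕ) (E : ℝ) (χ : Fin d → ℝ) :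
    lyapDim d E χ = lyapDimOfSeq d E (sortedExponents d χ) := rfl

section lyapDimOfSeq

variable {d i j : ℕ} {a c E E₁ E₂ E' : ℝ} {g g' : ℕ → ℝ}

theorem lyapIndex_le : lyapIndex d E g ≤ d := Nat.findGreatest_le d

theorem sum_range_lyapIndex_le (hE : 0 ≤ E) : ∑ k ∈ range (lyapIndex d E g), g k ≤ E :=
  Nat.findGreatest_spec (P := fun j => ∑ k ∈ range j, g k ≤ E) (Nat.zero_le d) (by simpa using hE)

theorem sum_range_lyapIndex_le_of_ne_zero (h : lyapIndex d E g ≠ 0) :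
    ∑ k ∈ range (lyapIndex d E g), g k ≤ E :=
  Nat.findGreatest_of_ne_zero rfl h

theorem lt_sum_range_lyapIndex_succ (h : lyapIndex d E g < d) :
    E < ∑ k ∈ range (lyapIndex d E g + 1), g k :=
  not_le.1 (Nat.findGreatest_is_greatest (Nat.lt_succ_self _) h)

theorem lyapIndex_mono (h : E₁ ≤ E₂) : lyapIndex d E₁ g ≤ lyapIndex d E₂ g :=
  Nat.findGreatest_mono_left (fun _ hj => hj.trans h) d

theorem lyapDimOfSeq_of_lt (h : lyapIndex d E g < d) :
    lyapDimOfSeq d E g =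
      lyapIndex d E g + (E - ∑ k ∈ range (lyapIndex d E g), g k) / g (lyapIndex d E g) :=
  if_pos h

theorem lyapDimOfSeq_of_eq (h : lyapIndex d E g = d) :
    lyapDimOfSeq d E g = d * E / ∑ k ∈ range d, g k :=
  if_neg h.not_lt

theorem mul_sub_le_sum_range_sub (hg : ∀ k < d, c ≤ g k) (hij : i ≤ j) (hj : j ≤ d) :
    c * (j - i) ≤ ∑ k ∈ range j, g k - ∑ k ∈ range i, g k := by
  rw [← sum_range_add_sum_Ico _ hij, add_sub_cancel_left, ← Nat.cast_sub hij, ← Nat.card_Ico,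
    mul_comm, ← nsmul_eq_mul]
  exact card_nsmul_le_sum _ _ _ fun k hk => hg k ((mem_Ico.1 hk).2.trans_le hj)

theorem mul_le_sum_range (hg : ∀ k < d, c ≤ g k) : c * d ≤ ∑ k ∈ range d, g k := by
  simpa using mul_sub_le_sum_range_sub hg (Nat.zero_le d) le_rfl

theorem sum_range_pos (hg : ∀ k < d, 0 < g k) (hd : 0 < d) : 0 < ∑ k ∈ range d, g k :=
  sum_pos (fun k hk => hg k (mem_range.1 hk)) (nonempty_range_iff.2 hd.ne')

theorem lyapDimOfSeq_lt_lyapIndex_add_one (hg : ∀ k < d, 0 < g k) (h : lyapIndex d E g < d) :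
    lyapDimOfSeq d E g < lyapIndex d E g + 1 := by
  have hE := lt_sum_range_lyapIndex_succ h
  rw [sum_range_succ] at hE
  rw [lyapDimOfSeq_of_lt h, add_lt_add_iff_left, div_lt_one (hg _ h)]
  linarith

theorem lyapIndex_le_lyapDimOfSeq (hg : ∀ k < d, 0 < g k) (hE : 0 ≤ E) :
    (lyapIndex d E g : ℝ) ≤ lyapDimOfSeq d E g := by
  have hS := sum_range_lyapIndex_le (g := g) (d := d) hE
  rcases lyapIndex_le.lt_or_eq with h | h
  · rw [lyapDimOfSeq_of_lt h]
    exact le_add_of_nonneg_right (div_nonneg (sub_nonneg.2 hS) (hg _ h).le)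
  rw [lyapDimOfSeq_of_eq h, h]
  rw [h] at hS
  rcases Nat.eq_zero_or_pos d with rfl | hd
  · simp
  rw [le_div_iff₀ (sum_range_pos hg hd)]
  exact mul_le_mul_of_nonneg_left hS (Nat.cast_nonneg _)

theorem lyapDimOfSeq_mono (hg' : ∀ k < d, 0 < g' k) (hgg' : ∀ k < d, g' k ≤ g k) (hE : 0 ≤ E)
    (hEE' : E ≤ E') : lyapDimOfSeq d E g ≤ lyapDimOfSeq d E' g' := by
  have hg : ∀ k < d, 0 < g k := fun k hk => (hg' k hk).trans_le (hgg' k hk)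
  have hsum : ∀ j ≤ d, ∑ k ∈ range j, g' k ≤ ∑ k ∈ range j, g k := fun j hj =>
    sum_le_sum fun k hk => hgg' k ((mem_range.1 hk).trans_le hj)
  have hS := sum_range_lyapIndex_le (d := d) (g := g) hE
  have hm : lyapIndex d E g ≤ lyapIndex d E' g' :=
    Nat.le_findGreatest lyapIndex_le ((hsum _ lyapIndex_le).trans (hS.trans hEE'))
  rcases hm.lt_or_eq with hlt | heq
  · calc lyapDimOfSeq d E g ≤ lyapIndex d E g + 1 :=
          (lyapDimOfSeq_lt_lyapIndex_add_one hg (hlt.trans_le lyapIndex_le)).le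
      _ ≤ lyapIndex d E' g' := by exact_mod_cast hlt
      _ ≤ lyapDimOfSeq d E' g' := lyapIndex_le_lyapDimOfSeq hg' (hE.trans hEE')
  rcases lyapIndex_le.lt_or_eq with h | h
  · rw [lyapDimOfSeq_of_lt h, lyapDimOfSeq_of_lt (heq ▸ h), ← heq, add_le_add_iff_left]
    have hsum_m := hsum _ h.le
    exact div_le_div₀ (by linarith) (by linarith) (hg' _ h) (hgg' _ h)
  rw [lyapDimOfSeq_of_eq h, lyapDimOfSeq_of_eq (heq ▸ h)]
  rw [h] at hS
  rcases Nat.eq_zero_or_pos d with rfl | hd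
  · simp
  exact div_le_div₀ (mul_nonneg (Nat.cast_nonneg d) (hE.trans hEE')) (by gcongr)
    (sum_range_pos hg' hd) (hsum _ le_rfl)

theorem add_one_sub_div_le_lyapDimOfSeq (hc : 0 < c) (hg : ∀ k < d, c ≤ g k)
    (h : lyapIndex d E g < d) :
    lyapIndex d E g + 1 - (∑ k ∈ range (lyapIndex d E g + 1), g k - E) / c ≤
      lyapDimOfSeq d E g := by
  have hE := lt_sum_range_lyapIndex_succ h
  have hgm : 0 < g (lyapIndex d E g) := hc.trans_le (hg _ h)
  have hdiv : (∑ k ∈ range (lyapIndex d E g + 1), g k - E) / g (lyapIndex d E g) ≤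
      (∑ k ∈ range (lyapIndex d E g + 1), g k - E) / c :=
    div_le_div_of_nonneg_left (sub_nonneg.2 hE.le) hc (hg _ h)
  rw [lyapDimOfSeq_of_lt h]
  rw [sum_range_succ] at hdiv ⊢
  have hsplit : (E - ∑ k ∈ range (lyapIndex d E g), g k) / g (lyapIndex d E g) =
      1 - (∑ k ∈ range (lyapIndex d E g), g k + g (lyapIndex d E g) - E) /
        g (lyapIndex d E g) := by
    field_simp; ring
  linarith

theorem lyapDimOfSeq_le_lyapIndex_add_div (hc : 0 < c) (hg : ∀ k < d, c ≤ g k)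
    (hE : ∑ k ∈ range (lyapIndex d E g), g k ≤ E) :
    lyapDimOfSeq d E g ≤ lyapIndex d E g + (E - ∑ k ∈ range (lyapIndex d E g), g k) / c := by
  rcases lyapIndex_le.lt_or_eq with h | h
  · rw [lyapDimOfSeq_of_lt h, add_le_add_iff_left]
    exact div_le_div_of_nonneg_left (sub_nonneg.2 hE) hc (hg _ h)
  rw [lyapDimOfSeq_of_eq h, h]
  rw [h] at hE
  rcases Nat.eq_zero_or_pos d with rfl | hd
  · simp at hE ⊢
    positivity
  have hS := mul_le_sum_range hg
  have hSpos : 0 < ∑ k ∈ range d, g k := lt_of_lt_of_le (by positivity) hS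
  have hdS : (d : ℝ) ≤ (∑ k ∈ range d, g k) / c := by rw [le_div_iff₀ hc]; linarith
  have hexcess := mul_le_mul_of_nonneg_left hdS (sub_nonneg.2 hE)
  rw [div_le_iff₀ hSpos]
  calc d * E = d * ∑ k ∈ range d, g k + (E - ∑ k ∈ range d, g k) * d := by ring
    _ ≤ d * ∑ k ∈ range d, g k + (E - ∑ k ∈ range d, g k) * ((∑ k ∈ range d, g k) / c) := by
      linarith
    _ = _ := by ring

theorem lyapDimOfSeq_sub_div_le (hc : 0 < c) (hg : ∀ k < d, c ≤ g k) (h : E₁ ≤ E₂) :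
    lyapDimOfSeq d E₂ g - (E₂ - E₁) / c ≤ lyapDimOfSeq d E₁ g := by
  rcases (lyapIndex_mono (d := d) (g := g) h).lt_or_eq with hlt | heq
  -- `E₁ < ∑ k ≤ m₁, g k ≤ E₂`: compare both values with the breakpoint `m₁ + 1`.
  · have hlow := add_one_sub_div_le_lyapDimOfSeq hc hg (hlt.trans_le lyapIndex_le)
    have hup := lyapDimOfSeq_le_lyapIndex_add_div (E := E₂) hc hg
      (sum_range_lyapIndex_le_of_ne_zero (by omega))
    have hgap := mul_sub_le_sum_range_sub hg hlt lyapIndex_le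
    set m₁ := lyapIndex d E₁ g
    set m₂ := lyapIndex d E₂ g
    set S₁ := ∑ k ∈ range (m₁ + 1), g k
    set S₂ := ∑ k ∈ range m₂, g k
    have hgap' : (m₂ : ℝ) - (m₁ + 1) ≤ (S₂ - S₁) / c := by
      rw [le_div_iff₀ hc]; push_cast at hgap; linarith
    have hsplit : (E₂ - S₂) / c + (S₂ - S₁) / c + (S₁ - E₁) / c = (E₂ - E₁) / c := by ring
    linarith
  rcases (lyapIndex_le (E := E₁) (g := g)).lt_or_eq with hm | hm
  · rw [lyapDimOfSeq_of_lt hm, lyapDimOfSeq_of_lt (heq ▸ hm), ← heq]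
    have hdiv : (E₂ - E₁) / g (lyapIndex d E₁ g) ≤ (E₂ - E₁) / c :=
      div_le_div_of_nonneg_left (sub_nonneg.2 h) hc (hg _ hm)
    have hsplit : (E₂ - ∑ k ∈ range (lyapIndex d E₁ g), g k) / g (lyapIndex d E₁ g) =
        (E₁ - ∑ k ∈ range (lyapIndex d E₁ g), g k) / g (lyapIndex d E₁ g) +
          (E₂ - E₁) / g (lyapIndex d E₁ g) := by ring
    linarith
  rw [lyapDimOfSeq_of_eq hm, lyapDimOfSeq_of_eq (heq ▸ hm)]
  rcases Nat.eq_zero_or_pos d with rfl | hd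
  · simpa using div_nonneg (sub_nonneg.2 h) hc.le
  have hS := mul_le_sum_range hg
  have hSpos : 0 < ∑ k ∈ range d, g k := lt_of_lt_of_le (by positivity) hS
  have hdiv : d * (E₂ - E₁) / ∑ k ∈ range d, g k ≤ (E₂ - E₁) / c := by
    rw [div_le_div_iff₀ hSpos hc]
    nlinarith [mul_le_mul_of_nonneg_left hS (sub_nonneg.2 h)]
  have hsplit : d * E₂ / ∑ k ∈ range d, g k =
      d * E₁ / ∑ k ∈ range d, g k + d * (E₂ - E₁) / ∑ k ∈ range d, g k := by ring
  linarith

theorem lyapIndex_const_mul (ha : 0 < a) :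
    lyapIndex d (a * E) (fun k => a * g k) = lyapIndex d E g := by
  simp only [lyapIndex, ← mul_sum, mul_le_mul_iff_right₀ ha]

theorem lyapDimOfSeq_const_mul (ha : 0 < a) :
    lyapDimOfSeq d (a * E) (fun k => a * g k) = lyapDimOfSeq d E g := by
  simp only [lyapDimOfSeq, lyapIndex_const_mul ha, ← mul_sum, ← mul_sub, mul_left_comm (d : ℝ),
    mul_div_mul_left _ _ ha.ne']

end lyapDimOfSeq

-- The `k`-th smallest value of a tuple is `≤ a` iff more than `k` of its values are `≤ a`.
theorem Tuple.apply_sort_le_apply_sort {α : Type*} [LinearOrder α] {n : ℕ} {f f' : Fin n → α}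
    (h : ∀ i, f i ≤ f' i) (k : Fin n) : f (Tuple.sort f k) ≤ f' (Tuple.sort f' k) := by
  set a := f' (Tuple.sort f' k)
  have hcard : ∀ f : Fin n → α, #{i | (f ∘ Tuple.sort f) i ≤ a} = #{i | f i ≤ a} := fun f =>
    card_equiv (Tuple.sort f) (by simp)
  have hk : k < #{i | (f' ∘ Tuple.sort f') i ≤ a} :=
    (Tuple.lt_card_le_iff_apply_le_of_monotone (Tuple.monotone_sort f')).2 le_rfl
  refine (Tuple.lt_card_le_iff_apply_le_of_monotone (Tuple.monotone_sort f)).1 ?_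
  rw [hcard] at hk ⊢
  exact hk.trans_le (card_le_card fun i => by simpa using (h i).trans)

section sortedExponents

variable {d k : ℕ} {a c : ℝ} {χ χ' : Fin d → ℝ}

theorem sortedExponents_le_sortedExponents (h : ∀ j, χ j ≤ χ' j) (k : ℕ) :
    sortedExponents d χ k ≤ sortedExponents d χ' k := by
  unfold sortedExponents
  split_ifs with hk
  · exact Tuple.apply_sort_le_apply_sort h _
  · exact le_rfl

theorem sortedExponents_of_lt (hk : k < d) :
    sortedExponents d χ k = χ (Tuple.sort χ ⟨k, hk⟩) :=
  dif_pos hk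

theorem sortedExponents_const_mul (ha : 0 < a) :
    sortedExponents d (fun j => a * χ j) = fun k => a * sortedExponents d χ k := by
  funext k
  unfold sortedExponents
  split_ifs with hk
  · have hmono : Monotone ((fun j => a * χ j) ∘ Tuple.sort χ) := fun i j hij =>
      mul_le_mul_of_nonneg_left (Tuple.monotone_sort χ hij) ha.le
    exact (congrFun (Tuple.comp_sort_eq_comp_iff_monotone.2 hmono) ⟨k, hk⟩).symm
  · rw [mul_zero]

end sortedExponents

section lyapDim

variable {d : ℕ} {a c E E₁ E₂ E' : ℝ} {χ χ' : Fin d → ℝ}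

theorem lyapDim_const_mul (ha : 0 < a) :
    lyapDim d (a * E) (fun j => a * χ j) = lyapDim d E χ := by
  rw [lyapDim_eq_lyapDimOfSeq, lyapDim_eq_lyapDimOfSeq, sortedExponents_const_mul ha,
    lyapDimOfSeq_const_mul ha]

theorem lyapDim_mono (hχ' : ∀ j, 0 < χ' j) (h : ∀ j, χ' j ≤ χ j) (hE : 0 ≤ E) (hEE' : E ≤ E') :
    lyapDim d E χ ≤ lyapDim d E' χ' := by
  rw [lyapDim_eq_lyapDimOfSeq, lyapDim_eq_lyapDimOfSeq]
  exact lyapDimOfSeq_mono (fun _ hk => sortedExponents_of_lt hk ▸ hχ' _)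
    (fun k _ => sortedExponents_le_sortedExponents h k) hE hEE'

theorem lyapDim_sub_div_le (hc : 0 < c) (hχ : ∀ j, c ≤ χ j) (h : E₁ ≤ E₂) :
    lyapDim d E₂ χ - (E₂ - E₁) / c ≤ lyapDim d E₁ χ := by
  rw [lyapDim_eq_lyapDimOfSeq, lyapDim_eq_lyapDimOfSeq]
  exact lyapDimOfSeq_sub_div_le hc (fun _ hk => sortedExponents_of_lt hk ▸ hχ _) h

theorem exists_pos_forall_lyapDim_sub_lt (hc : 0 < c) (hχ : ∀ j, c ≤ χ j) (hE : 0 ≤ E)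
    {ε : ℝ} (hε : 0 < ε) :
    ∃ δ > 0, ∀ (E' : ℝ) (χ' : Fin d → ℝ), 0 ≤ E' → E - δ ≤ E' → (∀ j, |χ' j - χ j| ≤ δ) →
      lyapDim d E χ - ε < lyapDim d E' χ' := by
  set δ := min (c / 2) (ε * c ^ 2 / (2 * (E + c)))
  have hδ : 0 < δ := lt_min (by positivity) (by positivity)
  have hδc : δ < c := (min_le_left _ _).trans_lt (by linarith)
  have hδε : δ * (E + c) ≤ ε * c ^ 2 / 2 := by
    rw [← le_div_iff₀ (by positivity), div_div]
    exact min_le_right _ _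
  refine ⟨δ, hδ, fun E' χ' hE' hEE' hχ' => ?_⟩
  set a := 1 + δ / c
  have ha : 1 ≤ a := le_add_of_nonneg_right (by positivity)
  set Y := min E' E
  have hY : E - δ ≤ Y := le_min hEE' (by linarith)
  have hχ'pos : ∀ j, 0 < χ' j := fun j => by linarith [hχ j, (abs_le.1 (hχ' j)).1]
  have hχ'le : ∀ j, χ' j ≤ a * χ j := fun j => by
    have : δ ≤ δ / c * χ j := by rw [div_mul_eq_mul_div, le_div_iff₀ hc]; nlinarith [hχ j]
    linarith [(abs_le.1 (hχ' j)).2]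
  have hmono : lyapDim d (Y / a) χ ≤ lyapDim d E' χ' := by
    rw [← lyapDim_const_mul (by positivity : 0 < a), mul_div_cancel₀ _ (by positivity)]
    exact lyapDim_mono hχ'pos hχ'le (le_min hE' hE) (min_le_left _ _)
  have hYa : Y / a ≤ E := (div_le_self (le_min hE' hE) ha).trans (min_le_right _ _)
  have hloss : (E - Y / a) / c < ε := by
    have hYa' : Y - Y * (δ / c) ≤ Y / a := by
      rw [le_div_iff₀ (by positivity)]
      nlinarith [le_min hE' hE, sq_nonneg (δ / c)]
    have hYt : Y * (δ / c) ≤ E * (δ / c) := by gcongr; exact min_le_right _ _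
    have hsimp : (δ + E * (δ / c)) / c = δ * (E + c) / c ^ 2 := by field_simp; ring
    calc (E - Y / a) / c ≤ (δ + E * (δ / c)) / c := by gcongr; linarith
      _ = δ * (E + c) / c ^ 2 := hsimp
      _ ≤ ε / 2 := by rw [div_le_iff₀ (by positivity)]; linarith
      _ < ε := half_lt_self hε
  linarith [lyapDim_sub_div_le hc hχ hYa]

end lyapDim

theorem Finite.exists_pos_forall_le {ι : Type*} [Finite ι] {f : ι → ℝ} (hf : ∀ i, 0 < f i) :
    ∃ c, 0 < c ∧ ∀ i, c ≤ f i := by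
  cases isEmpty_or_nonempty ι
  · exact ⟨1, one_pos, isEmptyElim⟩
  · obtain ⟨i₀, hi₀⟩ := Finite.exists_min f
    exact ⟨f i₀, hf i₀, hi₀⟩

section probabilityVector

variable {ι : Type*} [Fintype ι] {p x : ι → ℝ} {c : ℝ}

theorem sum_neg_mul_logb_nonneg (hp0 : ∀ i, 0 ≤ p i) (hp1 : ∑ i, p i = 1) :
    0 ≤ ∑ i, -(p i * Real.logb 2 (p i)) :=
  sum_nonneg fun i _ => neg_nonneg.2 <| mul_nonpos_of_nonneg_of_nonpos (hp0 i) <|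
    Real.logb_nonpos one_lt_two (hp0 i) (hp1 ▸ single_le_sum (fun j _ => hp0 j) (mem_univ i))

theorem le_neg_sum_mul (hp0 : ∀ i, 0 ≤ p i) (hp1 : ∑ i, p i = 1) (hx : ∀ i, c ≤ -x i) :
    c ≤ -∑ i, p i * x i :=
  calc c = ∑ i, p i * c := by rw [← sum_mul, hp1, one_mul]
    _ ≤ ∑ i, p i * -x i := sum_le_sum fun i _ => mul_le_mul_of_nonneg_left (hx i) (hp0 i)
    _ = -∑ i, p i * x i := by simp only [mul_neg, sum_neg_distrib]

end probabilityVector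

theorem stmt10_general {Λ : Type*} [Fintype Λ] (d : ℕ)
    (r : Λ → Fin d → ℝ) (hr : ∀ i j, r i j ≠ 0 ∧ |r i j| < 1)
    (p : Λ → ℝ) (hp0 : ∀ i, 0 ≤ p i) (hp1 : ∑ i, p i = 1) :
    ∀ ε : ℝ, 0 < ε → ∃ δ : ℝ, 0 < δ ∧
      ∀ n : ℕ, 1 ≤ n → ∀ q : (Fin n → Λ) → ℝ,
        (∀ u, 0 ≤ q u) → (∑ u, q u = 1) →
        ((∑ i, -(p i * Real.logb 2 (p i))) - δ ≤
          (1 / (n : ℝ)) * ∑ u, -(q u * Real.logb 2 (q u))) →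
        (∀ j : Fin d,
          abs ((1 / (n : ℝ)) * (∑ u, q u * ∑ k, Real.logb 2 |r (u k) j|) -
            ∑ i, p i * Real.logb 2 |r i j|) ≤ δ) →
        lyapDim d (∑ u, -(q u * Real.logb 2 (q u)))
            (fun j => -∑ u, q u * ∑ k, Real.logb 2 |r (u k) j|) >
          lyapDim d (∑ i, -(p i * Real.logb 2 (p i)))
            (fun j => -∑ i, p i * Real.logb 2 |r i j|) - ε := by
  intro ε hε
  obtain ⟨c, hc, hcr⟩ := Finite.exists_pos_forall_le
    (f := fun ij : Λ × Fin d => -Real.logb 2 |r ij.1 ij.2|)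
    fun ij => neg_pos.2 (Real.logb_neg one_lt_two (abs_pos.2 (hr _ _).1) (hr _ _).2)
  obtain ⟨δ, hδ, hδE⟩ := exists_pos_forall_lyapDim_sub_lt hc
    (fun j => le_neg_sum_mul hp0 hp1 fun i => hcr (i, j)) (sum_neg_mul_logb_nonneg hp0 hp1) hε
  refine ⟨δ, hδ, fun n hn q hq0 hq1 hqE hqχ => ?_⟩
  have hn' : (0 : ℝ) < 1 / n := one_div_pos.2 (by exact_mod_cast hn)
  have hq := hδE _ (fun j => 1 / n * -∑ u, q u * ∑ k, Real.logb 2 |r (u k) j|)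
    (mul_nonneg hn'.le (sum_neg_mul_logb_nonneg hq0 hq1)) hqE fun j => by
      rw [← abs_neg]; convert hqχ j using 2; ring
  rwa [lyapDim_const_mul hn'] at hq

/-- Continuity of the Lyapunov dimension: if `q` is a probability vector on `Λⁿ` whose
normalized entropy and normalized Lyapunov exponents are `δ`-close to those of `p`, then
`dim_L({φ_u}_{u∈Λⁿ}, q) > dim_L(Φ, p) − ε`. -/
theorem stmt10 {Λ : Type*} [Fintype Λ] [Nonempty Λ] (d : ℕ) (hd : 1 ≤ d)
    (r : Λ → Fin d → ℝ) (hr : ∀ i j, r i j ≠ 0 ∧ |r i j| < 1)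
    (p : Λ → ℝ) (hp0 : ∀ i, 0 ≤ p i) (hp1 : ∑ i, p i = 1) :
    ∀ ε : ℝ, 0 < ε → ∃ δ : ℝ, 0 < δ ∧
      ∀ n : ℕ, 1 ≤ n → ∀ q : (Fin n → Λ) → ℝ,
        (∀ u, 0 ≤ q u) → (∑ u, q u = 1) →
        ((∑ i, -(p i * Real.logb 2 (p i))) - δ ≤
          (1 / (n : ℝ)) * ∑ u, -(q u * Real.logb 2 (q u))) →
        (∀ j : Fin d,
          abs ((1 / (n : ℝ)) * (∑ u, q u * ∑ k, Real.logb 2 |r (u k) j|) -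
            ∑ i, p i * Real.logb 2 |r i j|) ≤ δ) →
        lyapDim d (∑ u, -(q u * Real.logb 2 (q u)))
            (fun j => -∑ u, q u * ∑ k, Real.logb 2 |r (u k) j|) >
          lyapDim d (∑ i, -(p i * Real.logb 2 (p i)))
            (fun j => -∑ i, p i * Real.logb 2 |r i j|) - ε :=
  stmt10_general d r hr p hp0 hp1
end
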